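/- arXiv:1009.2486 — 3 statements merged into one kernel-verified Lean document; each statement's English description precedes it below -/
import Mathlib

section
/- Let p be an odd prime and let x be an integer. Then $p \sum_{k=1}^{p-1} \frac{D_k(x)}{k} \equiv (-1+\sqrt{-x})^p + (-1-\sqrt{-x})^p + 2 = 2 + 2\sum_{j=0}^{(p-1)/2}\binom{p}{2j}(-1)^{p-2j}(-x)^j \pmod{p^2}$, where $1/k$ denotes the inverse of k modulo $p^2$. -/
open Finset Polynomial

section helpers
variable {p : ℕ} [hp : Fact p.Prime]

/-- L1: sum over Icc 1 (p-1) of f(cast) equals sum over nonzero elements. -/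
lemma sum_Icc_cast {M : Type*} [AddCommMonoid M] (f : ZMod p → M) :
    ∑ k ∈ Finset.Icc 1 (p - 1), f (k : ZMod p)
      = ∑ a ∈ Finset.univ.erase (0 : ZMod p), f a := by
  haveI : NeZero p := ⟨hp.out.pos.ne'⟩
  refine Finset.sum_nbij' (fun k => (k : ZMod p)) (fun a => a.val) ?_ ?_ ?_ ?_ ?_
  · intro k hk
    simp only [Finset.mem_Icc] at hk
    simp only [Finset.mem_erase, Finset.mem_univ, and_true]
    rw [Ne, ZMod.natCast_eq_zero_iff]
    intro hdvd
    have := Nat.le_of_dvd (by omega) hdvd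
    omega
  · intro a ha
    simp only [Finset.mem_erase, Finset.mem_univ, and_true] at ha
    have h1 : a.val ≠ 0 := by
      simpa [ZMod.val_eq_zero] using ha
    have h2 : a.val < p := ZMod.val_lt a
    simp only [Finset.mem_Icc]
    omega
  · intro k hk
    simp only [Finset.mem_Icc] at hk
    exact ZMod.val_cast_of_lt (by omega)
  · intro a _
    simp [ZMod.natCast_val, ZMod.cast_id]
  · intro k _
    rfl

/-- L3: sum of a low-degree polynomial over all of ZMod p vanishes. -/
lemma sum_eval_eq_zero (P : (ZMod p)[X]) (hP : P.natDegree < p - 1) :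
    ∑ a : ZMod p, P.eval a = 0 := by
  have hcard : Fintype.card (ZMod p) = p := ZMod.card p
  calc ∑ a : ZMod p, P.eval a
      = ∑ a : ZMod p, ∑ i ∈ range (P.natDegree + 1), P.coeff i * a ^ i := by
        refine Finset.sum_congr rfl fun a _ => ?_
        exact P.eval_eq_sum_range a
    _ = ∑ i ∈ range (P.natDegree + 1), P.coeff i * ∑ a : ZMod p, a ^ i := by
        rw [Finset.sum_comm]
        exact Finset.sum_congr rfl fun i _ => by rw [Finset.mul_sum]
    _ = 0 := by
        refine Finset.sum_eq_zero fun i hi => ?_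
        rw [FiniteField.sum_pow_lt_card_sub_one, mul_zero]
        rw [hcard]
        simp only [Finset.mem_range] at hi
        omega

/-- L2: sum of inverses vanishes. -/
lemma sum_inv_eq_zero (hodd : Odd p) :
    ∑ k ∈ Finset.Icc 1 (p - 1), ((k : ZMod p))⁻¹ = 0 := by
  have hp3 : 3 ≤ p := by
    have h2 := hp.out.two_le; have ho := hodd; rw [Nat.odd_iff] at ho; omega
  rw [sum_Icc_cast (fun a => a⁻¹)]
  have h0 : ((0 : ZMod p))⁻¹ = 0 := inv_zero
  rw [Finset.sum_erase _ h0]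
  have he : ∑ a ∈ (Finset.univ : Finset (ZMod p)), a⁻¹
      = ∑ a ∈ (Finset.univ : Finset (ZMod p)), a := by
    refine Finset.sum_nbij' (fun a => a⁻¹) (fun a => a⁻¹) ?_ ?_ ?_ ?_ ?_ <;>
      simp [inv_inv]
  rw [he]
  have := FiniteField.sum_pow_lt_card_sub_one (K := ZMod p) 1 (by rw [ZMod.card]; omega)
  simpa using this

end helpers

section more
variable {p : ℕ} [hp : Fact p.Prime]

/-- L4: `C(p-1, i) ≡ (-1)^i mod p`. -/
lemma choose_p_sub_one (i : ℕ) (hi : i ≤ p - 1) :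
    ((p - 1).choose i : ZMod p) = (-1) ^ i := by
  induction i with
  | zero => simp
  | succ n ih =>
    have hn : n ≤ p - 1 := by omega
    have hpos := hp.out.pos
    have hpascal : (p - 1).choose n + (p - 1).choose (n + 1) = p.choose (n + 1) := by
      have := Nat.choose_succ_succ (p - 1) n
      rw [← this]
      congr 1
      omega
    have hdvd : p ∣ p.choose (n + 1) :=
      hp.out.dvd_choose_self (Nat.succ_ne_zero n) (by omega)
    have hcast : ((p.choose (n + 1) : ℕ) : ZMod p) = 0 :=
      (ZMod.natCast_eq_zero_iff _ _).2 hdvd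
    have := congrArg (fun m : ℕ => (m : ZMod p)) hpascal
    simp only [Nat.cast_add] at this
    rw [hcast] at this
    rw [ih hn] at this
    have : ((p - 1).choose (n + 1) : ZMod p) = -((-1) ^ n) := by linear_combination this
    rw [this, pow_succ]
    ring

/-- L5: factorial times choose as a product in any commutative ring. -/
lemma factorial_mul_choose_cast (R : Type*) [CommRing R] (n r : ℕ) :
    ((Nat.factorial r : ℕ) : R) * (n.choose r : R) = ∏ i ∈ range r, ((n : R) - i) := by
  rcases le_or_gt r n with h | h
  · have h1 : n.descFactorial r = Nat.factorial r * n.choose r := Nat.descFactorial_eq_factorial_mul_choose n r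
    have h2 : n.descFactorial r = ∏ i ∈ range r, (n - i) := Nat.descFactorial_eq_prod_range n r
    have := h1.symm.trans h2
    have hc := congrArg (fun m : ℕ => (m : R)) this
    simp only [Nat.cast_mul, Nat.cast_prod] at hc
    rw [hc]
    refine Finset.prod_congr rfl fun i hi => ?_
    simp only [Finset.mem_range] at hi
    rw [Nat.cast_sub (by omega)]
  · rw [Nat.choose_eq_zero_of_lt h, Nat.cast_zero, mul_zero]
    refine (Finset.prod_eq_zero (Finset.mem_range.2 h) ?_).symm
    simp

end more

section sj
variable {p : ℕ} [hp : Fact p.Prime]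

/-- L7: the inner sum vanishes for large j. -/
lemma S_eq_zero (hodd : Odd p) (j : ℕ) (hj1 : (p - 1) / 2 < j) (hj2 : j ≤ p - 1) :
    ∑ k ∈ Finset.Icc 1 (p - 1),
      (((k - 1).choose (j - 1) * (k + j).choose j : ℕ) : ZMod p) = 0 := by
  have hp3 : 3 ≤ p := by
    have h2 := hp.out.two_le; have ho := hodd; rw [Nat.odd_iff] at ho; omega
  have hpodd : p % 2 = 1 := Nat.odd_iff.1 hodd
  refine Finset.sum_eq_zero fun k hk => ?_
  simp only [Finset.mem_Icc] at hk
  rcases Nat.lt_or_ge k j with h | h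
  · have : (k - 1).choose (j - 1) = 0 := Nat.choose_eq_zero_of_lt (by omega)
    rw [this]
    simp
  · have hdvd : p ∣ (k + j).choose j := by
      refine hp.out.dvd_choose (by omega) (by omega) (by omega)
    have : (((k + j).choose j : ℕ) : ZMod p) = 0 :=
      (ZMod.natCast_eq_zero_iff _ _).2 hdvd
    rw [Nat.cast_mul, this, mul_zero]

/-- L6: the inner sum equals `(-1)^j` for small j. -/
lemma S_eq_neg_one_pow (hodd : Odd p) (j : ℕ) (hj1 : 1 ≤ j) (hj2 : 2 * j ≤ p - 1) :
    ∑ k ∈ Finset.Icc 1 (p - 1),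
      (((k - 1).choose (j - 1) * (k + j).choose j : ℕ) : ZMod p) = (-1) ^ j := by
  have hp3 : 3 ≤ p := by
    have h2 := hp.out.two_le; have ho := hodd; rw [Nat.odd_iff] at ho; omega
  -- the factorials are nonzero
  have hfac : ∀ r : ℕ, r < p → ((Nat.factorial r : ℕ) : ZMod p) ≠ 0 := by
    intro r hr h0
    rw [ZMod.natCast_eq_zero_iff] at h0
    rw [Nat.Prime.dvd_factorial hp.out] at h0
    omega
  have hc1 : ((Nat.factorial (j - 1) : ℕ) : ZMod p) ≠ 0 := hfac _ (by omega)
  have hc2 : ((Nat.factorial j : ℕ) : ZMod p) ≠ 0 := hfac _ (by omega)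
  -- the polynomial
  set P : (ZMod p)[X] :=
    (∏ i ∈ range (j - 1), (X - Polynomial.C (((1 + i : ℕ) : ZMod p)))) *
    (∏ i ∈ range j, (X - Polynomial.C (((i : ZMod p) - (j : ZMod p))))) with hPdef
  have hmon1 : (∏ i ∈ range (j - 1), (X - Polynomial.C (((1 + i : ℕ) : ZMod p)))).Monic :=
    Polynomial.monic_prod_of_monic _ _ fun i _ => Polynomial.monic_X_sub_C _
  have hmon2 : (∏ i ∈ range j, (X - Polynomial.C (((i : ZMod p) - (j : ZMod p))))).Monic :=
    Polynomial.monic_prod_of_monic _ _ fun i _ => Polynomial.monic_X_sub_C _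
  have hdeg : P.natDegree = (j - 1) + j := by
    rw [hPdef, hmon1.natDegree_mul hmon2]
    congr 1
    · rw [Polynomial.natDegree_prod_of_monic _ _ fun i _ => Polynomial.monic_X_sub_C _]
      simp only [Polynomial.natDegree_X_sub_C, Finset.sum_const, smul_eq_mul, mul_one,
        Finset.card_range]
    · rw [Polynomial.natDegree_prod_of_monic _ _ fun i _ => Polynomial.monic_X_sub_C _]
      simp only [Polynomial.natDegree_X_sub_C, Finset.sum_const, smul_eq_mul, mul_one,
        Finset.card_range]
  -- key pointwise identity
  have hkey : ∀ k : ℕ, 1 ≤ k → k ≤ p - 1 →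
      (((k - 1).choose (j - 1) * (k + j).choose j : ℕ) : ZMod p) *
        (((Nat.factorial (j - 1) : ℕ) : ZMod p) * ((Nat.factorial j : ℕ) : ZMod p))
      = P.eval ((k : ℕ) : ZMod p) := by
    intro k hk1 hk2
    have e1 : ((Nat.factorial (j-1) : ℕ) : ZMod p) * (((k - 1).choose (j - 1) : ℕ) : ZMod p)
        = ∏ i ∈ range (j - 1), (((k - 1 : ℕ) : ZMod p) - i) :=
      factorial_mul_choose_cast (ZMod p) (k - 1) (j - 1)
    have e2 : ((Nat.factorial j : ℕ) : ZMod p) * (((k + j).choose j : ℕ) : ZMod p)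
        = ∏ i ∈ range j, (((k + j : ℕ) : ZMod p) - i) :=
      factorial_mul_choose_cast (ZMod p) (k + j) j
    have hcast1 : ((k - 1 : ℕ) : ZMod p) = (k : ZMod p) - 1 := by
      rw [Nat.cast_sub hk1]; norm_num
    have hcast2 : ((k + j : ℕ) : ZMod p) = (k : ZMod p) + j := by push_cast; ring
    calc (((k - 1).choose (j - 1) * (k + j).choose j : ℕ) : ZMod p) *
        (((Nat.factorial (j - 1) : ℕ) : ZMod p) * ((Nat.factorial j : ℕ) : ZMod p))
        = (((Nat.factorial (j-1) : ℕ) : ZMod p) * (((k - 1).choose (j - 1) : ℕ) : ZMod p)) *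
          (((Nat.factorial j : ℕ) : ZMod p) * (((k + j).choose j : ℕ) : ZMod p)) := by
          push_cast; ring
      _ = (∏ i ∈ range (j - 1), (((k - 1 : ℕ) : ZMod p) - i)) *
          (∏ i ∈ range j, (((k + j : ℕ) : ZMod p) - i)) := by rw [e1, e2]
      _ = P.eval ((k : ℕ) : ZMod p) := by
          rw [hPdef, Polynomial.eval_mul, Polynomial.eval_prod, Polynomial.eval_prod]
          simp only [Polynomial.eval_sub, Polynomial.eval_X, Polynomial.eval_C]
          congr 1
          · exact Finset.prod_congr rfl fun i _ => by rw [hcast1]; push_cast; ring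
          · exact Finset.prod_congr rfl fun i _ => by rw [hcast2]; push_cast; ring
  -- the value of P at 0
  have hprod1 : ∏ i ∈ range (j-1), ((0 : ZMod p) - ((1 + i : ℕ) : ZMod p))
      = (-1) ^ (j-1) * ((Nat.factorial (j-1) : ℕ) : ZMod p) := by
    calc ∏ i ∈ range (j-1), ((0 : ZMod p) - ((1 + i : ℕ) : ZMod p))
        = ∏ i ∈ range (j-1), ((-1 : ZMod p) * ((1 + i : ℕ) : ZMod p)) :=
          Finset.prod_congr rfl fun i _ => by ring
      _ = (-1) ^ (j-1) * ∏ i ∈ range (j-1), ((1 + i : ℕ) : ZMod p) := by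
          rw [Finset.prod_mul_distrib, Finset.prod_const, Finset.card_range]
      _ = (-1) ^ (j-1) * ((Nat.factorial (j-1) : ℕ) : ZMod p) := by
          congr 1
          rw [← Nat.cast_prod]
          congr 1
          rw [← Finset.prod_range_add_one_eq_factorial]
          exact Finset.prod_congr rfl fun i _ => by omega
  have hprod2 : ∏ i ∈ range j, ((0 : ZMod p) - (((i : ZMod p)) - (j : ZMod p)))
      = ((Nat.factorial j : ℕ) : ZMod p) := by
    calc ∏ i ∈ range j, ((0 : ZMod p) - (((i : ZMod p)) - (j : ZMod p)))
        = ∏ i ∈ range j, (((j - i : ℕ)) : ZMod p) := by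
          refine Finset.prod_congr rfl fun i hi => ?_
          rw [Nat.cast_sub (le_of_lt (Finset.mem_range.1 hi))]
          ring
      _ = ((∏ i ∈ range j, (j - i) : ℕ) : ZMod p) := by rw [Nat.cast_prod]
      _ = ((Nat.factorial j : ℕ) : ZMod p) := by
          congr 1
          rw [← Finset.prod_range_add_one_eq_factorial j]
          rw [← Finset.prod_range_reflect (fun i => i + 1) j]
          exact Finset.prod_congr rfl fun i hi => by
            have := Finset.mem_range.1 hi; omega
  have heval0 : P.eval 0 = (-1) ^ (j-1) *
      (((Nat.factorial (j - 1) : ℕ) : ZMod p) * ((Nat.factorial j : ℕ) : ZMod p)) := by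
    rw [hPdef, Polynomial.eval_mul, Polynomial.eval_prod, Polynomial.eval_prod]
    simp only [Polynomial.eval_sub, Polynomial.eval_X, Polynomial.eval_C]
    rw [hprod1, hprod2]
    ring
  -- summation
  have hsum : (∑ k ∈ Finset.Icc 1 (p - 1),
      (((k - 1).choose (j - 1) * (k + j).choose j : ℕ) : ZMod p)) *
        (((Nat.factorial (j - 1) : ℕ) : ZMod p) * ((Nat.factorial j : ℕ) : ZMod p))
      = (-1) ^ j *
        (((Nat.factorial (j - 1) : ℕ) : ZMod p) * ((Nat.factorial j : ℕ) : ZMod p)) := by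
    rw [Finset.sum_mul]
    have : ∀ k ∈ Finset.Icc 1 (p-1),
        (((k - 1).choose (j - 1) * (k + j).choose j : ℕ) : ZMod p) *
        (((Nat.factorial (j - 1) : ℕ) : ZMod p) * ((Nat.factorial j : ℕ) : ZMod p))
        = P.eval ((k : ℕ) : ZMod p) := fun k hk => by
      have := Finset.mem_Icc.1 hk
      exact hkey k this.1 this.2
    rw [Finset.sum_congr rfl this]
    rw [sum_Icc_cast (fun a => P.eval a)]
    have htot : ∑ a : ZMod p, P.eval a = 0 := by
      refine sum_eval_eq_zero P ?_
      rw [hdeg]; omega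
    have herase : ∑ a ∈ Finset.univ.erase (0 : ZMod p), P.eval a + P.eval 0
        = ∑ a : ZMod p, P.eval a := Finset.sum_erase_add _ _ (Finset.mem_univ 0)
    have : ∑ a ∈ Finset.univ.erase (0 : ZMod p), P.eval a = - P.eval 0 := by
      rw [htot] at herase; linear_combination herase
    rw [this, heval0]
    have hj' : j - 1 + 1 = j := by omega
    have hpow : ((-1 : ZMod p)) ^ j = (-1) ^ (j - 1) * (-1) := by
      conv_lhs => rw [← hj']
      rw [pow_succ]
    rw [hpow]
    ring
  exact mul_right_cancel₀ (mul_ne_zero hc1 hc2) hsum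

end sj

/-- The Delannoy polynomial `D_n(x)` at an integer `x`. -/
def delannoyPoly (n : ℕ) (x : ℤ) : ℤ :=
  ∑ k ∈ Finset.range (n + 1), (n.choose k * (n + k).choose k : ℤ) * x ^ k

section core
variable {p : ℕ} [hp : Fact p.Prime]

lemma core_sum (hodd : Odd p) (x : ℤ) :
    ∑ k ∈ Finset.Icc 1 (p - 1), ((delannoyPoly k x : ℤ) : ZMod p) * (k : ZMod p)⁻¹
      = ∑ j ∈ Finset.Icc 1 ((p - 1) / 2), ((j : ZMod p))⁻¹ * (-(x : ZMod p)) ^ j := by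
  have hp3 : 3 ≤ p := by
    have h2 := hp.out.two_le; have ho := hodd; rw [Nat.odd_iff] at ho; omega
  have hpodd : p % 2 = 1 := Nat.odd_iff.1 hodd
  set m := (p - 1) / 2 with hm
  set y : ZMod p := (x : ZMod p) with hy
  have hd : ∀ k : ℕ, ((delannoyPoly k x : ℤ) : ZMod p)
      = ∑ j ∈ Finset.range (k + 1), ((k.choose j * (k + j).choose j : ℕ) : ZMod p) * y ^ j := by
    intro k
    simp only [delannoyPoly]
    push_cast
    rfl
  have hinner : ∀ j : ℕ, 1 ≤ j → j ≤ p - 1 →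
      ∑ k ∈ Finset.Icc 1 (p - 1),
          ((k.choose j * (k + j).choose j : ℕ) : ZMod p) * y ^ j * ((k : ZMod p))⁻¹
      = ((j : ZMod p))⁻¹ * y ^ j *
          ∑ k ∈ Finset.Icc 1 (p - 1),
            (((k - 1).choose (j - 1) * (k + j).choose j : ℕ) : ZMod p) := by
    intro j hj1 hj2
    rw [Finset.mul_sum]
    refine Finset.sum_congr rfl fun k hk => ?_
    obtain ⟨hk1, hk2⟩ := Finset.mem_Icc.1 hk
    have hkne : (k : ZMod p) ≠ 0 := by
      rw [Ne, ZMod.natCast_eq_zero_iff]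
      intro hdvd; have := Nat.le_of_dvd (by omega) hdvd; omega
    have hjne : (j : ZMod p) ≠ 0 := by
      rw [Ne, ZMod.natCast_eq_zero_iff]
      intro hdvd; have := Nat.le_of_dvd (by omega) hdvd; omega
    have hnat : k * ((k - 1).choose (j - 1)) = k.choose j * j := by
      have h := Nat.add_one_mul_choose_eq (k - 1) (j - 1)
      have e1 : k - 1 + 1 = k := by omega
      have e2 : j - 1 + 1 = j := by omega
      rw [e1, e2] at h
      exact h
    have hcast : (k : ZMod p) * (((k - 1).choose (j - 1) : ℕ) : ZMod p)
        = ((k.choose j : ℕ) : ZMod p) * (j : ZMod p) := by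
      exact_mod_cast congrArg (Nat.cast : ℕ → ZMod p) hnat
    have key : ((k.choose j : ℕ) : ZMod p) * ((k : ZMod p))⁻¹
        = ((j : ZMod p))⁻¹ * (((k - 1).choose (j - 1) : ℕ) : ZMod p) := by
      field_simp
      linear_combination -hcast
    push_cast
    linear_combination ((((k + j).choose j : ℕ) : ZMod p) * y ^ j) * key
  calc ∑ k ∈ Finset.Icc 1 (p - 1), ((delannoyPoly k x : ℤ) : ZMod p) * (k : ZMod p)⁻¹
      = ∑ k ∈ Finset.Icc 1 (p - 1), ∑ j ∈ Finset.range p,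
          ((k.choose j * (k + j).choose j : ℕ) : ZMod p) * y ^ j * ((k : ZMod p))⁻¹ := by
        refine Finset.sum_congr rfl fun k hk => ?_
        obtain ⟨hk1, hk2⟩ := Finset.mem_Icc.1 hk
        rw [hd k, Finset.sum_mul]
        refine Finset.sum_subset ?_ ?_
        · intro j hj
          simp only [Finset.mem_range] at hj ⊢
          omega
        · intro j hjt hjs
          simp only [Finset.mem_range] at hjt hjs
          have : k < j := by omega
          rw [Nat.choose_eq_zero_of_lt this]
          simp
    _ = ∑ j ∈ Finset.range p, ∑ k ∈ Finset.Icc 1 (p - 1),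
          ((k.choose j * (k + j).choose j : ℕ) : ZMod p) * y ^ j * ((k : ZMod p))⁻¹ :=
        Finset.sum_comm
    _ = ∑ j ∈ Finset.Icc 1 m, ∑ k ∈ Finset.Icc 1 (p - 1),
          ((k.choose j * (k + j).choose j : ℕ) : ZMod p) * y ^ j * ((k : ZMod p))⁻¹ := by
        refine (Finset.sum_subset ?_ ?_).symm
        · intro j hj
          simp only [Finset.mem_Icc] at hj
          simp only [Finset.mem_range]
          omega
        · intro j hjt hjs
          simp only [Finset.mem_range] at hjt
          simp only [Finset.mem_Icc, not_and, not_le] at hjs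
          rcases Nat.eq_zero_or_pos j with rfl | hj1
          · simp only [Nat.choose_zero_right, Nat.add_zero, one_mul, pow_zero, mul_one,
              Nat.cast_one]
            simpa using sum_inv_eq_zero (p := p) hodd
          · have hjm : m < j := hjs hj1
            rw [hinner j hj1 (by omega)]
            rw [S_eq_zero hodd j hjm (by omega)]
            ring
    _ = ∑ j ∈ Finset.Icc 1 m, ((j : ZMod p))⁻¹ * (-y) ^ j := by
        refine Finset.sum_congr rfl fun j hj => ?_
        obtain ⟨hj1, hj2⟩ := Finset.mem_Icc.1 hj
        rw [hinner j hj1 (by omega)]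
        rw [S_eq_neg_one_pow hodd j hj1 (by omega)]
        rw [neg_pow]
        ring

end core

theorem sun_1_3 (p : ℕ) [Fact p.Prime] (hp : Odd p) (x : ℤ) :
    (p : ℤ) * ((∑ k ∈ Finset.Icc 1 (p - 1),
          (delannoyPoly k x : ZMod p) * (k : ZMod p)⁻¹).val : ℤ) ≡
      2 - 2 * ∑ j ∈ Finset.range ((p - 1) / 2 + 1), (p.choose (2 * j) : ℤ) * (-x) ^ j
        [ZMOD (p : ℤ) ^ 2] := by
  have hpp : Fact p.Prime := inferInstance
  have hp3 : 3 ≤ p := by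
    have h2 := hpp.out.two_le; have ho := hp; rw [Nat.odd_iff] at ho; omega
  have hpodd : p % 2 = 1 := Nat.odd_iff.1 hp
  haveI : NeZero p := ⟨hpp.out.pos.ne'⟩
  set m := (p - 1) / 2 with hm
  set s : ZMod p := ∑ k ∈ Finset.Icc 1 (p - 1),
      (delannoyPoly k x : ZMod p) * (k : ZMod p)⁻¹ with hs
  set u : ℕ → ℕ := fun j => (((2 * j : ℕ) : ZMod p)⁻¹).val with hu
  -- nonvanishing of 2j mod p for 1 ≤ j ≤ m
  have h2j : ∀ j : ℕ, 1 ≤ j → j ≤ m → ((2 * j : ℕ) : ZMod p) ≠ 0 := by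
    intro j h1 h2
    rw [Ne, ZMod.natCast_eq_zero_iff]
    intro hdvd
    have := Nat.le_of_dvd (by omega) hdvd
    omega
  -- integer congruence p^2 ∣ C(p,2j) + p * u j
  have hterm : ∀ j : ℕ, 1 ≤ j → j ≤ m →
      ((p ^ 2 : ℕ) : ℤ) ∣ (p.choose (2 * j) : ℤ) + (p : ℤ) * (u j : ℤ) := by
    intro j h1 h2
    have h2jp : 2 * j ≤ p - 1 := by omega
    -- hA : p * C(p-1, 2j-1) = C(p, 2j) * (2j)
    have hA : p * (p - 1).choose (2 * j - 1) = p.choose (2 * j) * (2 * j) := by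
      have h := Nat.add_one_mul_choose_eq (p - 1) (2 * j - 1)
      have e1 : p - 1 + 1 = p := by omega
      have e2 : 2 * j - 1 + 1 = 2 * j := by omega
      rw [e1, e2] at h
      exact h
    -- hB : p ∣ C(p-1,2j-1) + 1
    have hB : (p : ℤ) ∣ ((p - 1).choose (2 * j - 1) : ℤ) + 1 := by
      have hcp := choose_p_sub_one (p := p) (2 * j - 1) (by omega)
      have hodd' : Odd (2 * j - 1) := ⟨j - 1, by omega⟩
      rw [hodd'.neg_one_pow] at hcp
      rw [← ZMod.intCast_zmod_eq_zero_iff_dvd]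
      push_cast
      rw [hcp]
      ring
    -- hC : p ∣ C(p, 2j)
    have hC : p ∣ p.choose (2 * j) :=
      hpp.out.dvd_choose_self (by omega) (by omega)
    -- hD : p ∣ 2j * u j - 1
    have hD : (p : ℤ) ∣ 2 * (j : ℤ) * (u j : ℤ) - 1 := by
      rw [← ZMod.intCast_zmod_eq_zero_iff_dvd]
      push_cast
      have hv : ((u j : ℕ) : ZMod p) = ((2 * j : ℕ) : ZMod p)⁻¹ := by
        rw [hu]
        simp [ZMod.natCast_val, ZMod.cast_id]
      push_cast at hv
      rw [hv]
      have hmi := mul_inv_cancel₀ (h2j j h1 h2)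
      push_cast at hmi
      linear_combination hmi
    obtain ⟨b, hb⟩ := hB
    obtain ⟨c, hc⟩ := hC
    obtain ⟨d, hd⟩ := hD
    have hcZ : (p.choose (2 * j) : ℤ) = (p : ℤ) * (c : ℤ) := by exact_mod_cast hc
    have hAZ : (p : ℤ) * ((p - 1).choose (2 * j - 1) : ℤ)
        = (p.choose (2 * j) : ℤ) * (2 * (j : ℤ)) := by exact_mod_cast hA
    have hcancel : ((p - 1).choose (2 * j - 1) : ℤ) = (c : ℤ) * (2 * (j : ℤ)) := by
      have hpne : (p : ℤ) ≠ 0 := by positivity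
      apply mul_left_cancel₀ hpne
      rw [hAZ, hcZ]
      ring
    have hdvd2 : (p : ℤ) ∣ ((c : ℤ) + (u j : ℤ)) * (2 * (j : ℤ)) := by
      have heq : ((c : ℤ) + (u j : ℤ)) * (2 * (j : ℤ))
          = (((p - 1).choose (2 * j - 1) : ℤ) + 1) + (2 * (j : ℤ) * (u j : ℤ) - 1) := by
        rw [hcancel]; ring
      rw [heq, hb, hd]
      exact ⟨b + d, by ring⟩
    have hpprime : Prime (p : ℤ) := Nat.prime_iff_prime_int.mp hpp.out
    have hnd : ¬ (p : ℤ) ∣ (2 * (j : ℤ)) := by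
      rw [show (2 * (j : ℤ)) = ((2 * j : ℕ) : ℤ) by push_cast; ring]
      rw [Int.natCast_dvd_natCast]
      intro hdvd
      have := Nat.le_of_dvd (by omega) hdvd
      omega
    have hcu : (p : ℤ) ∣ (c : ℤ) + (u j : ℤ) :=
      ((hpprime.dvd_mul).1 hdvd2).resolve_right hnd
    obtain ⟨w, hw⟩ := hcu
    refine ⟨w, ?_⟩
    push_cast
    rw [hcZ]
    linear_combination (p : ℤ) * hw
  -- mod p: s equals twice the u-sum
  have hsmodp : s = 2 * ∑ j ∈ Finset.Icc 1 m, ((u j : ℕ) : ZMod p) * (-(x : ZMod p)) ^ j := by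
    rw [hs, core_sum hp x, Finset.mul_sum]
    refine Finset.sum_congr rfl fun j hj => ?_
    obtain ⟨h1, h2⟩ := Finset.mem_Icc.1 hj
    have hv : ((u j : ℕ) : ZMod p) = ((2 * j : ℕ) : ZMod p)⁻¹ := by
      rw [hu]; simp [ZMod.natCast_val, ZMod.cast_id]
    have hjne : (j : ZMod p) ≠ 0 := by
      rw [Ne, ZMod.natCast_eq_zero_iff]
      intro hdvd; have := Nat.le_of_dvd (by omega) hdvd; omega
    have h2ne : (2 : ZMod p) ≠ 0 := by
      have := h2j 1 le_rfl (by omega)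
      simpa using this
    rw [hv, show ((2 * j : ℕ) : ZMod p) = 2 * (j : ZMod p) by push_cast; ring, mul_inv]
    have hone : (2 : ZMod p) * 2⁻¹ = 1 := mul_inv_cancel₀ h2ne
    linear_combination (-(((j : ZMod p))⁻¹ * (-(x : ZMod p)) ^ j)) * hone
  -- p divides the integer difference
  have hdiff : (p : ℤ) ∣ ((s.val : ℤ) - 2 * ∑ j ∈ Finset.Icc 1 m, (u j : ℤ) * (-x) ^ j) := by
    rw [← ZMod.intCast_zmod_eq_zero_iff_dvd]
    push_cast
    rw [show ((s.val : ℕ) : ZMod p) = s by simp [ZMod.natCast_val, ZMod.cast_id]]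
    rw [hsmodp]
    ring
  obtain ⟨w, hwd⟩ := hdiff
  -- move to ZMod (p^2)
  have hmodeq : ((p : ℤ) ^ 2) = ((p ^ 2 : ℕ) : ℤ) := by push_cast; ring
  rw [hmodeq, ← ZMod.intCast_eq_intCast_iff]
  push_cast
  have hp2 : (p : ZMod (p ^ 2)) * (p : ZMod (p ^ 2)) = 0 := by
    have h := ZMod.natCast_self (p ^ 2)
    push_cast at h
    linear_combination h
  have hsplit : ∑ j ∈ Finset.range (m + 1), (p.choose (2 * j) : ZMod (p ^ 2)) * (-(x : ZMod (p ^ 2))) ^ j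
      = 1 + ∑ j ∈ Finset.Icc 1 m, (p.choose (2 * j) : ZMod (p ^ 2)) * (-(x : ZMod (p ^ 2))) ^ j := by
    rw [Finset.range_eq_Ico, Finset.sum_eq_sum_Ico_succ_bot (by omega : 0 < m + 1)]
    rw [Finset.Ico_add_one_right_eq_Icc]
    simp
  have hCsum : ∑ j ∈ Finset.Icc 1 m, (p.choose (2 * j) : ZMod (p ^ 2)) * (-(x : ZMod (p ^ 2))) ^ j
      = -(p : ZMod (p ^ 2)) *
        ∑ j ∈ Finset.Icc 1 m, ((u j : ℕ) : ZMod (p ^ 2)) * (-(x : ZMod (p ^ 2))) ^ j := by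
    rw [Finset.mul_sum]
    refine Finset.sum_congr rfl fun j hj => ?_
    obtain ⟨h1, h2⟩ := Finset.mem_Icc.1 hj
    have hz : (((p.choose (2 * j) : ℤ) + (p : ℤ) * (u j : ℤ) : ℤ) : ZMod (p ^ 2)) = 0 := by
      rw [ZMod.intCast_zmod_eq_zero_iff_dvd]
      exact hterm j h1 h2
    push_cast at hz
    linear_combination (-(x : ZMod (p ^ 2))) ^ j * hz
  rw [hsplit, hCsum]
  have hcast_w : ((s.val : ℕ) : ZMod (p ^ 2))
      = 2 * (∑ j ∈ Finset.Icc 1 m, ((u j : ℕ) : ZMod (p ^ 2)) * (-(x : ZMod (p ^ 2))) ^ j)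
        + (p : ZMod (p ^ 2)) * (w : ZMod (p ^ 2)) := by
    have h := congrArg (Int.cast : ℤ → ZMod (p ^ 2)) hwd
    push_cast at h
    linear_combination h
  rw [hcast_w]
  linear_combination (w : ZMod (p ^ 2)) * hp2
end

section
/- Let p be an odd prime, p ≠ 3. Then $\sum_{k=1}^{p-1} \frac{D_k(3)}{k} \equiv -2\,\frac{2^{p-1}-1}{p} \pmod{p}$, where $1/k$ denotes the inverse of k mod p. -/
open Finset

theorem Finset.sum_range_two_mul {M : Type*} [AddCommMonoid M] (f : ℕ → M) (N : ℕ) :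
    ∑ i ∈ range (2 * N), f i = ∑ j ∈ range N, (f (2 * j) + f (2 * j + 1)) := by
  induction N with
  | zero => simp
  | succ N ih => rw [mul_add_one, sum_range_succ, sum_range_succ, sum_range_succ, ih, add_assoc]

theorem Zsqrtd.re_one_add_sqrtd_pow (d : ℤ) {n N : ℕ} (hN : n < 2 * N) :
    ((1 + sqrtd : ℤ√d) ^ n).re = ∑ j ∈ range N, n.choose (2 * j) * d ^ j := by
  have hsq : (sqrtd : ℤ√d) ^ 2 = d := by ext <;> simp [sq]
  have hpow : (1 + sqrtd : ℤ√d) ^ n = ∑ i ∈ range (2 * N), (n.choose i : ℤ√d) * sqrtd ^ i := by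
    rw [add_comm, add_pow, ← sum_range_add_sum_Ico _ (by omega : n + 1 ≤ 2 * N)]
    rw [sum_eq_zero (s := Ico _ _) fun i hi => by
      simp [Nat.choose_eq_zero_of_lt (mem_Ico.1 hi).1]]
    simp [mul_comm]
  have hsplit : (1 + sqrtd : ℤ√d) ^ n = ⟨∑ j ∈ range N, n.choose (2 * j) * d ^ j,
      ∑ j ∈ range N, n.choose (2 * j + 1) * d ^ j⟩ := by
    rw [decompose, hpow, sum_range_two_mul, sum_add_distrib]
    push_cast
    rw [mul_sum]
    congr 1 <;> refine sum_congr rfl fun j _ => ?_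
    · rw [pow_mul, hsq]
    · rw [pow_succ, pow_mul, hsq]; ring
  rw [hsplit]

theorem sum_choose_two_mul_mul_neg_three_pow {n N : ℕ} (hn : n % 6 = 1 ∨ n % 6 = 5)
    (hN : n < 2 * N) : ∑ j ∈ range N, (n.choose (2 * j) : ℤ) * (-3) ^ j = 2 ^ (n - 1) := by
  rw [← Zsqrtd.re_one_add_sqrtd_pow (-3) hN]
  have hcube : (1 + Zsqrtd.sqrtd : ℤ√(-3)) ^ 3 = ((-8 : ℤ) : ℤ√(-3)) := by
    ext <;> simp [pow_succ]
  obtain ⟨q, r, rfl, hr⟩ : ∃ q r, n = 3 * (2 * q) + r ∧ (r = 1 ∨ r = 5) :=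
    ⟨n / 6, n % 6, by omega, hn⟩
  rw [pow_add, pow_mul, hcube, ← Int.cast_pow, Zsqrtd.re_mul, Zsqrtd.re_intCast,
    Zsqrtd.im_intCast, mul_zero, zero_mul, add_zero, pow_mul]
  rcases hr with rfl | rfl
  · rw [show 3 * (2 * q) + 1 - 1 = 6 * q by omega, pow_mul]
    norm_num
  · rw [show 3 * (2 * q) + 5 - 1 = 6 * q + 4 by omega, pow_add, pow_mul]
    norm_num [pow_succ, Zsqrtd.re_mul, Zsqrtd.im_mul]

theorem Nat.Prime.dvd_choose_self_of_ne {p k : ℕ} (hp : p.Prime) (hk : k ≠ 0) (hkp : k ≠ p) :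
    p ∣ p.choose k := by
  rcases lt_or_gt_of_ne hkp with h | h
  · exact hp.dvd_choose_self hk h
  · simp [Nat.choose_eq_zero_of_lt h]

theorem Nat.Prime.fermatQuotient_two_eq_sum {p : ℕ} (hp : p.Prime)
    (h6 : p % 6 = 1 ∨ p % 6 = 5) :
    (2 ^ (p - 1) - 1) / (p : ℤ) =
      ∑ j ∈ Ico 1 p, ((p.choose (2 * j) / p : ℕ) : ℤ) * (-3) ^ j := by
  refine Int.ediv_eq_of_eq_mul_left (by exact_mod_cast hp.ne_zero) ?_
  have hsum := sum_choose_two_mul_mul_neg_three_pow h6 (by omega : p < 2 * p)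
  rw [range_eq_Ico, sum_eq_sum_Ico_succ_bot hp.pos] at hsum
  rw [← hsum, Nat.mul_zero, Nat.choose_zero_right, Nat.cast_one, pow_zero, one_mul,
    add_sub_cancel_left, sum_mul]
  refine sum_congr rfl fun j hj => ?_
  have hj := mem_Ico.1 hj
  rw [mul_right_comm, ← Nat.cast_mul,
    Nat.div_mul_cancel (hp.dvd_choose_self_of_ne (by omega) (by omega))]

theorem Nat.sum_antidiagonal_choose_mul_choose (r s n : ℕ) :
    ∑ ij ∈ antidiagonal n, ij.1.choose r * ij.2.choose s = (n + 1).choose (r + s + 1) := by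
  induction n generalizing r with
  | zero => cases r <;> cases s <;> simp [Nat.choose_eq_zero_of_lt]
  | succ n ih =>
    rw [Nat.sum_antidiagonal_succ]
    cases r with
    | zero =>
      have h := ih 0
      simp only [Nat.choose_zero_right, one_mul, zero_add] at h ⊢
      rw [h, Nat.choose_succ_succ' (n + 1)]
    | succ r =>
      simp only [Nat.choose_zero_succ, zero_mul, zero_add, Nat.choose_succ_succ' _ r, add_mul,
        sum_add_distrib, ih]
      rw [show r + 1 + s + 1 = r + s + 1 + 1 by ring, Nat.choose_succ_succ' (n + 1)]

theorem Nat.sum_Icc_choose_pred_mul_choose_sub (r s n : ℕ) :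
    ∑ k ∈ Icc 1 n, (k - 1).choose r * (n - k).choose s = n.choose (r + s + 1) := by
  cases n with
  | zero => simp
  | succ n =>
    rw [← sum_antidiagonal_choose_mul_choose]
    refine sum_nbij' (fun k => (k - 1, n + 1 - k)) (fun ij => ij.1 + 1) ?_ ?_ ?_ ?_ ?_ <;>
      simp <;> omega

namespace ZMod

theorem natCast_ne_zero_of_lt {n a : ℕ} (ha : a ≠ 0) (h : a < n) : (a : ZMod n) ≠ 0 := by
  rw [Ne, natCast_eq_zero_iff]
  exact fun hd => ha (Nat.eq_zero_of_dvd_of_lt hd h)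

variable {p : ℕ} [Fact p.Prime]

/-- Both sides times `j!` are rising factorials, at `n + 1` and at `-m ≡ n + 1`. -/
theorem natCast_add_choose_eq_neg_one_pow_mul_choose {n m j : ℕ} (hnm : p ∣ n + m + 1)
    (hj : j < p) : ((n + j).choose j : ZMod p) = (-1) ^ j * m.choose j := by
  have hfact : (j.factorial : ZMod p) ≠ 0 := by
    rw [Ne, natCast_eq_zero_iff, Nat.Prime.dvd_factorial Fact.out]
    omega
  have hneg : ((n + 1 : ℕ) : ZMod p) = -m := by
    rw [eq_neg_iff_add_eq_zero, ← Nat.cast_add, natCast_eq_zero_iff, Nat.add_right_comm]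
    exact hnm
  apply mul_left_cancel₀ hfact
  rw [← Nat.cast_mul, ← Nat.ascFactorial_eq_factorial_mul_choose,
    ← ascPochhammer_nat_eq_ascFactorial, ascPochhammer_eval_cast, hneg,
    ascPochhammer_eval_neg_eq_descPochhammer, descPochhammer_eval_eq_descFactorial,
    Nat.descFactorial_eq_factorial_mul_choose]
  push_cast
  ring

/-- From `p C(p - 1, i - 1) = i C(p, i)` and Pascal's rule
`C(p - 1, i - 1) + C(p - 1, i) = C(p, i)`. -/
theorem natCast_mul_choose_div_self {i : ℕ} (hi : i ≠ 0) (hip : i ≠ p) :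
    (i : ZMod p) * (p.choose i / p : ℕ) = -((p - 1).choose i : ZMod p) := by
  have hp : p.Prime := Fact.out
  obtain ⟨c, hc⟩ := hp.dvd_choose_self_of_ne hi hip
  obtain ⟨i, rfl⟩ := Nat.exists_eq_add_one_of_ne_zero hi
  obtain ⟨q, rfl⟩ := Nat.exists_eq_add_one_of_ne_zero hp.ne_zero
  have hmul : q.choose i = (i + 1) * c := by
    have h := Nat.add_one_mul_choose_eq q i
    rw [hc, mul_assoc] at h
    rw [Nat.eq_of_mul_eq_mul_left hp.pos h, mul_comm]
  have hpascal := congrArg (Nat.cast : ℕ → ZMod (q + 1)) (Nat.choose_succ_succ' q i)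
  rw [hc, hmul, Nat.cast_mul, natCast_self, zero_mul, Nat.cast_add, Nat.cast_mul] at hpascal
  rw [hc, Nat.mul_div_cancel_left _ hp.pos, Nat.add_sub_cancel]
  linear_combination -hpascal

theorem sum_Icc_inv_eq_zero (hp : p ≠ 2) : ∑ k ∈ Icc 1 (p - 1), (k : ZMod p)⁻¹ = 0 := by
  have hodd := (Fact.out : p.Prime).odd_of_ne_two hp
  refine sum_involution (fun k _ => p - k) (fun k hk => ?_) (fun k hk _ => ?_)
    (fun k hk => ?_) (fun k hk => ?_)
  · rw [Nat.cast_sub ((mem_Icc.1 hk).2.trans (Nat.sub_le _ _)), natCast_self, zero_sub, inv_neg,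
      add_neg_cancel]
  all_goals simp only [mem_Icc] at hk ⊢; grind

theorem sum_Icc_choose_mul_choose_sub_mul_inv {n j : ℕ} (hn : n < p) (hj : j ≠ 0)
    (hjp : j < p) :
    ∑ k ∈ Icc 1 n, (k.choose j * (n - k).choose j : ZMod p) * (k : ZMod p)⁻¹ =
      n.choose (2 * j) * (j : ZMod p)⁻¹ := by
  have hj0 : (j : ZMod p) ≠ 0 := natCast_ne_zero_of_lt hj hjp
  have hterm : ∀ k ∈ Icc 1 n, (k.choose j * (n - k).choose j : ZMod p) * (k : ZMod p)⁻¹ =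
      ((k - 1).choose (j - 1) * (n - k).choose j : ℕ) * (j : ZMod p)⁻¹ := by
    intro k hk
    have hk := mem_Icc.1 hk
    have hk0 : (k : ZMod p) ≠ 0 := natCast_ne_zero_of_lt (by omega) (by omega)
    have h := Nat.add_one_mul_choose_eq (k - 1) (j - 1)
    rw [Nat.sub_add_cancel hk.1, Nat.sub_add_cancel (Nat.one_le_iff_ne_zero.2 hj)] at h
    have hc : (k.choose j : ZMod p) = k * (k - 1).choose (j - 1) * (j : ZMod p)⁻¹ := by
      rw [← Nat.cast_mul, h, Nat.cast_mul, mul_inv_cancel_right₀ hj0]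
    rw [Nat.cast_mul, hc]
    field_simp
  rw [sum_congr rfl hterm, ← sum_mul, ← Nat.cast_sum, Nat.sum_Icc_choose_pred_mul_choose_sub,
    show j - 1 + j + 1 = 2 * j by omega]

end ZMod

section Delannoy

variable {p : ℕ} [Fact p.Prime]

theorem intCast_delannoyPoly {k : ℕ} (hk : k < p) (x : ℤ) :
    (delannoyPoly k x : ZMod p) =
      ∑ j ∈ range p, (-x : ZMod p) ^ j * (k.choose j * (p - 1 - k).choose j) := by
  rw [delannoyPoly, ← sum_subset (range_subset_range.2 hk) fun j _ hj => ?_]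
  · push_cast
    refine sum_congr rfl fun j hj => ?_
    rw [ZMod.natCast_add_choose_eq_neg_one_pow_mul_choose (m := p - 1 - k) (dvd_of_eq (by omega))
      (by simp at hj; omega)]
    ring
  · rw [Nat.choose_eq_zero_of_lt (by simpa using hj)]
    simp

theorem sum_Icc_delannoyPoly_mul_inv (hp : p ≠ 2) (x : ℤ) :
    ∑ k ∈ Icc 1 (p - 1), (delannoyPoly k x : ZMod p) * (k : ZMod p)⁻¹ =
      ∑ j ∈ Ico 1 p, (-x : ZMod p) ^ j * ((p - 1).choose (2 * j) * (j : ZMod p)⁻¹) := by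
  have hprime : p.Prime := Fact.out
  calc ∑ k ∈ Icc 1 (p - 1), (delannoyPoly k x : ZMod p) * (k : ZMod p)⁻¹
      = ∑ j ∈ range p, (-x : ZMod p) ^ j * ∑ k ∈ Icc 1 (p - 1),
          (k.choose j * (p - 1 - k).choose j : ZMod p) * (k : ZMod p)⁻¹ := by
        simp_rw [mul_sum]
        rw [sum_comm]
        refine sum_congr rfl fun k hk => ?_
        rw [intCast_delannoyPoly (by simp at hk; omega), sum_mul]
        exact sum_congr rfl fun j _ => by ring
    _ = _ := by
        rw [range_eq_Ico, sum_eq_sum_Ico_succ_bot hprime.pos]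
        simp only [Nat.choose_zero_right, Nat.cast_one, one_mul, pow_zero]
        rw [ZMod.sum_Icc_inv_eq_zero hp, zero_add]
        refine sum_congr rfl fun j hj => ?_
        have hj := mem_Ico.1 hj
        rw [ZMod.sum_Icc_choose_mul_choose_sub_mul_inv (by omega) (by omega) hj.2]

end Delannoy

theorem sun_1_4 (p : ℕ) [Fact p.Prime] (hp : Odd p) (hp3 : p ≠ 3) :
    ∑ k ∈ Finset.Icc 1 (p - 1), (delannoyPoly k 3 : ZMod p) * (k : ZMod p)⁻¹ =
      -2 * (((2 ^ (p - 1) - 1) / p : ℤ) : ZMod p) := by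
  have hprime : p.Prime := Fact.out
  have h6 : p % 6 = 1 ∨ p % 6 = 5 := by
    have := hprime.eq_one_or_self_of_dvd 3
    have := Nat.odd_iff.1 hp
    omega
  rw [sum_Icc_delannoyPoly_mul_inv (by omega), hprime.fermatQuotient_two_eq_sum h6]
  simp only [Int.cast_sum, Int.cast_mul, Int.cast_natCast, Int.cast_pow, Int.cast_neg,
    Int.cast_ofNat, mul_sum]
  refine sum_congr rfl fun j hj => ?_
  have hj := mem_Ico.1 hj
  have hj0 : (j : ZMod p) ≠ 0 := ZMod.natCast_ne_zero_of_lt (by omega) hj.2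
  rw [← neg_neg ((p - 1).choose (2 * j) : ZMod p),
    ← ZMod.natCast_mul_choose_div_self (by omega) (by omega)]
  push_cast
  field_simp
end

section
/- Let p be an odd prime. Then $\sum_{k=1}^{p-1} \frac{D_k(-9)}{k} \equiv -6\,\frac{2^{p-1}-1}{p} \pmod{p}$, where $1/k$ denotes the inverse of k mod p. -/
open Finset Polynomial Nat

namespace FiniteField

variable {K : Type*} [Field K] [Fintype K]

theorem sum_eval_eq_zero {P : K[X]} (hP : P.natDegree < Fintype.card K - 1) :
    ∑ x : K, P.eval x = 0 := by
  simp_rw [eval_eq_sum_range]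
  rw [sum_comm]
  refine sum_eq_zero fun i hi => ?_
  rw [← mul_sum, sum_pow_lt_card_sub_one K i (by rw [mem_range] at hi; omega), mul_zero]

theorem sum_inv_eq_zero (hK : 2 < Fintype.card K) : ∑ x : K, x⁻¹ = 0 := by
  rw [Fintype.sum_equiv (Equiv.inv K) (fun x => x⁻¹) id fun _ => rfl]
  simpa using sum_pow_lt_card_sub_one K 1 (by omega)

end FiniteField

theorem ZMod.sum_Ico_one_natCast {p : ℕ} [NeZero p] {M : Type*} [AddCommGroup M]
    (g : ZMod p → M) : ∑ k ∈ Ico 1 p, g k = ∑ x, g x - g 0 := by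
  rw [eq_sub_iff_add_eq, add_comm, ← Nat.cast_zero,
    ← sum_range_eq_add_Ico (fun k : ℕ => g k) (NeZero.pos p)]
  exact sum_nbij' (fun k => (k : ZMod p)) ZMod.val (by simp) (by simp [ZMod.val_lt])
    (fun k hk => ZMod.val_cast_of_lt (mem_range.1 hk)) (by simp) (by simp)

theorem Finset.sum_range_two_mul_add_one {M : Type*} [AddCommMonoid M] (f : ℕ → M) (n : ℕ) :
    ∑ k ∈ range (2 * n + 1), f k =
      ∑ j ∈ range (n + 1), f (2 * j) + ∑ j ∈ range n, f (2 * j + 1) := by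
  induction n with
  | zero => simp
  | succ n ih =>
    rw [show 2 * (n + 1) + 1 = 2 * n + 1 + 1 + 1 by ring, sum_range_succ, sum_range_succ, ih,
      sum_range_succ (fun j => f (2 * j)) (n + 1), sum_range_succ (fun j => f (2 * j + 1)) n]
    rw [show 2 * (n + 1) = 2 * n + 1 + 1 by ring]
    abel

theorem delannoyPoly_eq_sum_range {n m : ℕ} (h : n < m) (x : ℤ) :
    delannoyPoly n x = ∑ k ∈ range m, (n.choose k * (n + k).choose k : ℤ) * x ^ k :=
  sum_subset (range_subset_range.2 h) fun k _ hk => by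
    simp [choose_eq_zero_of_lt (not_lt.1 (mt mem_range.2 hk))]

theorem descPochhammer_eval_neg_one (R : Type*) [Ring R] (n : ℕ) :
    (descPochhammer R n).eval (-1) = (-1) ^ n * n ! := by
  have h := ascPochhammer_eval_neg_eq_descPochhammer R (-1 : R) n
  rw [neg_neg, ascPochhammer_eval_one] at h
  rw [h, ← mul_assoc, ← pow_add, ← two_mul, pow_mul, neg_one_sq, one_pow, one_mul]

theorem descPochhammer_mul_ascPochhammer_eval_natCast (R : Type*) [Ring R] (j k : ℕ) :
    (descPochhammer R j).eval (k : R) * (ascPochhammer R j).eval ((k : R) + 1) =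
      ((j ! ^ 2 * (k.choose j * (k + j).choose j) : ℕ) : R) := by
  rw [descPochhammer_eval_eq_descFactorial, ← Nat.cast_succ,
    ascPochhammer_nat_eq_natCast_ascFactorial, ← Nat.cast_mul,
    descFactorial_eq_factorial_mul_choose, ascFactorial_eq_factorial_mul_choose]
  congr 1
  ring

theorem Nat.Prime.mul_sum_choose_div_mul_pow {p : ℕ} (hp : p.Prime) (x : ℤ) :
    (p : ℤ) * ∑ k ∈ range p, ((p.choose k / p : ℕ) : ℤ) * x ^ k = (x + 1) ^ p - x ^ p - 1 := by
  have hterm : ∀ k ∈ Ico 1 p,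
      (p : ℤ) * (((p.choose k / p : ℕ) : ℤ) * x ^ k) = x ^ k * 1 ^ (p - k) * p.choose k := by
    intro k hk
    obtain ⟨hk1, hkp⟩ := mem_Ico.1 hk
    rw [← mul_assoc, ← Nat.cast_mul, Nat.mul_div_cancel' (hp.dvd_choose_self (by omega) hkp),
      one_pow, mul_one, mul_comm]
  rw [mul_sum, sum_range_eq_add_Ico _ hp.pos, sum_congr rfl hterm, add_pow, sum_range_succ,
    sum_range_eq_add_Ico _ hp.pos]
  simp [Nat.div_eq_of_lt hp.one_lt]

theorem Nat.Prime.mul_sum_choose_div_mul_three_pow_add_neg_three_pow {p : ℕ} (hp : p.Prime)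
    (hodd : Odd p) :
    (p : ℤ) * ∑ k ∈ range p, ((p.choose k / p : ℕ) : ℤ) * (3 ^ k + (-3) ^ k) =
      2 * (2 ^ p + 1) * (2 ^ (p - 1) - 1) := by
  simp only [mul_add, sum_add_distrib]
  have h3 := hp.mul_sum_choose_div_mul_pow 3
  have h3' := hp.mul_sum_choose_div_mul_pow (-3)
  have h4 : ((3 : ℤ) + 1) ^ p = 2 ^ p * 2 ^ p := by rw [← mul_pow]; norm_num
  have h2 : ((-3 : ℤ) + 1) ^ p = -2 ^ p := by norm_num [hodd.neg_pow]
  have hneg3 : (-3 : ℤ) ^ p = -3 ^ p := hodd.neg_pow 3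
  have hpow : (2 : ℤ) ^ p = 2 * 2 ^ (p - 1) := by
    rw [← _root_.pow_succ' (2 : ℤ) (p - 1), Nat.sub_add_cancel hp.one_le]
  linear_combination h3 + h3' + h4 + h2 - hneg3 + (2 ^ p + 1) * hpow

def chooseInvSum (p j : ℕ) : ZMod p :=
  ∑ k ∈ Ico 1 p, ((k.choose j * (k + j).choose j : ℕ) : ZMod p) * (k : ZMod p)⁻¹

theorem sum_delannoyPoly_mul_inv (p : ℕ) (x : ℤ) :
    ∑ k ∈ Ico 1 p, (delannoyPoly k x : ZMod p) * (k : ZMod p)⁻¹ =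
      ∑ j ∈ range p, (x : ZMod p) ^ j * chooseInvSum p j := by
  simp_rw [chooseInvSum, mul_sum]
  rw [sum_comm]
  refine sum_congr rfl fun k hk => ?_
  rw [delannoyPoly_eq_sum_range (mem_Ico.1 hk).2, Int.cast_sum, sum_mul]
  refine sum_congr rfl fun j _ => ?_
  push_cast
  ring

theorem ZMod.natCast_ne_zero_of_pos_of_lt {p k : ℕ} (h0 : 0 < k) (hk : k < p) :
    (k : ZMod p) ≠ 0 := by
  rw [Ne, ZMod.natCast_eq_zero_iff]
  exact Nat.not_dvd_of_pos_of_lt h0 hk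

section PrimeField

variable {p : ℕ} [hp : Fact p.Prime]

theorem ZMod.natCast_factorial_ne_zero {k : ℕ} (hk : k < p) : (k ! : ZMod p) ≠ 0 := by
  rw [Ne, ZMod.natCast_eq_zero_iff, hp.out.dvd_factorial]
  omega

theorem ZMod.natCast_choose_sub_one {k : ℕ} (hk : k < p) :
    ((p - 1).choose k : ZMod p) = (-1) ^ k := by
  have h := descPochhammer_eval_eq_descFactorial (ZMod p) (p - 1) k
  rw [Nat.cast_pred hp.out.pos, ZMod.natCast_self, zero_sub, descPochhammer_eval_neg_one,
    descFactorial_eq_factorial_mul_choose, Nat.cast_mul, mul_comm] at h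
  exact mul_left_cancel₀ (ZMod.natCast_factorial_ne_zero hk) h.symm

-- At `k = 0` both sides are junk zeros: `1 / p = 0` in `ℕ` and `(0 : ZMod p)⁻¹ = 0`.
theorem ZMod.natCast_choose_div_self {k : ℕ} (hk : k < p) :
    ((p.choose k / p : ℕ) : ZMod p) = (-1) ^ (k + 1) * (k : ZMod p)⁻¹ := by
  rcases k with _ | i
  · simp [Nat.div_eq_of_lt hp.out.one_lt]
  have hdvd := hp.out.dvd_choose_self i.succ_ne_zero hk
  have h := Nat.add_one_mul_choose_eq (p - 1) i
  rw [Nat.sub_add_cancel hp.out.one_le, ← Nat.mul_div_cancel' hdvd, mul_assoc] at h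
  have h' := congrArg (Nat.cast : ℕ → ZMod p) (Nat.eq_of_mul_eq_mul_left hp.out.pos h)
  push_cast [ZMod.natCast_choose_sub_one (by omega : i < p)] at h'
  rw [show (-1 : ZMod p) ^ (i + 1 + 1) = (-1) ^ i by ring, h', Nat.cast_succ,
    mul_inv_cancel_right₀ (by exact_mod_cast ZMod.natCast_ne_zero_of_pos_of_lt i.succ_pos hk)]

theorem sum_choose_div_mul_pow_add_neg_pow {m : ℕ} (hm : p = 2 * m + 1) (x : ZMod p) :
    ∑ k ∈ range p, ((p.choose k / p : ℕ) : ZMod p) * (x ^ k + (-x) ^ k) =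
      -∑ j ∈ range (m + 1), (x ^ 2) ^ j * (j : ZMod p)⁻¹ := by
  have h2 : (2 : ZMod p) ≠ 0 := Ring.two_ne_zero (by rw [ZMod.ringChar_zmod_n]; omega)
  have hodd_terms : ∀ j ∈ range m, ((p.choose (2 * j + 1) / p : ℕ) : ZMod p) *
      (x ^ (2 * j + 1) + (-x) ^ (2 * j + 1)) = 0 := by
    intro j _
    rw [(odd_two_mul_add_one j).neg_pow, add_neg_cancel, mul_zero]
  rw [show range p = range (2 * m + 1) by rw [hm], sum_range_two_mul_add_one,
    sum_eq_zero hodd_terms, add_zero, ← sum_neg_distrib]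
  refine sum_congr rfl fun j hj => ?_
  rw [ZMod.natCast_choose_div_self (by rw [mem_range] at hj; omega),
    (odd_two_mul_add_one j).neg_one_pow, (even_two_mul j).neg_pow, ← pow_mul, Nat.cast_mul,
    Nat.cast_two, mul_inv]
  linear_combination (-(x ^ (2 * j)) * (j : ZMod p)⁻¹) * mul_inv_cancel₀ h2

theorem sum_range_nine_pow_mul_inv {m : ℕ} (hm : p = 2 * m + 1) :
    ∑ j ∈ range (m + 1), (9 : ZMod p) ^ j * (j : ZMod p)⁻¹ =
      -6 * (((2 ^ (p - 1) - 1) / p : ℤ) : ZMod p) := by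
  have h2 : (2 : ZMod p) ≠ 0 := Ring.two_ne_zero (by rw [ZMod.ringChar_zmod_n]; omega)
  have hq : (p : ℤ) * ((2 ^ (p - 1) - 1) / p) = 2 ^ (p - 1) - 1 := by
    refine Int.mul_ediv_cancel' ((ZMod.intCast_zmod_eq_zero_iff_dvd _ _).1 ?_)
    push_cast
    rw [ZMod.pow_card_sub_one_eq_one h2, sub_self]
  have hT : ∑ k ∈ range p, ((p.choose k / p : ℕ) : ℤ) * (3 ^ k + (-3) ^ k) =
      2 * (2 ^ p + 1) * ((2 ^ (p - 1) - 1) / p) := by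
    refine mul_left_cancel₀ (Int.natCast_ne_zero.2 hp.out.ne_zero) ?_
    rw [hp.out.mul_sum_choose_div_mul_three_pow_add_neg_three_pow ⟨m, hm⟩]
    linear_combination -(2 * (2 ^ p + 1)) * hq
  have hcast := congrArg (Int.cast : ℤ → ZMod p) hT
  simp only [Int.cast_sum, Int.cast_mul, Int.cast_natCast, Int.cast_add, Int.cast_pow,
    Int.cast_neg, Int.cast_ofNat, Int.cast_one, ZMod.pow_card] at hcast
  rw [sum_choose_div_mul_pow_add_neg_pow hm] at hcast
  norm_num at hcast
  linear_combination -hcast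

theorem chooseInvSum_zero (hp2 : p ≠ 2) : chooseInvSum p 0 = 0 := by
  have hcard : 2 < Fintype.card (ZMod p) := by
    rw [ZMod.card]
    exact lt_of_le_of_ne hp.out.two_le (Ne.symm hp2)
  simp only [chooseInvSum, choose_zero_right, mul_one, Nat.cast_one, one_mul]
  rw [ZMod.sum_Ico_one_natCast (fun x => x⁻¹), FiniteField.sum_inv_eq_zero hcard, inv_zero,
    sub_zero]

theorem chooseInvSum_of_two_mul_lt {j : ℕ} (hj : j ≠ 0) (h : 2 * j < p) :
    chooseInvSum p j = (-1) ^ j * (j : ZMod p)⁻¹ := by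
  obtain ⟨i, rfl⟩ := exists_eq_add_one_of_ne_zero hj
  set f : (ZMod p)[X] :=
    (descPochhammer (ZMod p) i).comp (X - 1) * (ascPochhammer (ZMod p) (i + 1)).comp (X + 1)
    with hf
  have hfac := ZMod.natCast_factorial_ne_zero (p := p) (k := i + 1) (by omega)
  have hterm : ∀ k ∈ Ico 1 p,
      ((k.choose (i + 1) * (k + (i + 1)).choose (i + 1) : ℕ) : ZMod p) * (k : ZMod p)⁻¹ =
        (((i + 1)! : ZMod p) ^ 2)⁻¹ * f.eval (k : ZMod p) := by
    intro k hk
    have hk0 := ZMod.natCast_ne_zero_of_pos_of_lt (mem_Ico.1 hk).1 (mem_Ico.1 hk).2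
    have hkf : (k : ZMod p) * f.eval (k : ZMod p) =
        (((i + 1)! ^ 2 * (k.choose (i + 1) * (k + (i + 1)).choose (i + 1)) : ℕ) : ZMod p) := by
      rw [← descPochhammer_mul_ascPochhammer_eval_natCast, descPochhammer_succ_left]
      simp only [hf, eval_mul, eval_comp, eval_X, eval_sub, eval_add, eval_one, mul_assoc]
    rw [eq_inv_mul_iff_mul_eq₀ (pow_ne_zero _ hfac), ← mul_right_inj' hk0, hkf]
    push_cast
    field_simp
  have hdeg : f.natDegree < Fintype.card (ZMod p) - 1 := by
    rw [ZMod.card]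
    calc f.natDegree
        ≤ ((descPochhammer (ZMod p) i).comp (X - 1)).natDegree +
            ((ascPochhammer (ZMod p) (i + 1)).comp (X + 1)).natDegree := natDegree_mul_le
      _ = i + (i + 1) := by
        rw [natDegree_comp, natDegree_comp, descPochhammer_natDegree, ascPochhammer_natDegree,
          ← C_1, natDegree_X_sub_C, natDegree_X_add_C, mul_one, mul_one]
      _ < p - 1 := by omega
  have hf0 : f.eval 0 = (-1) ^ i * i ! * (i + 1)! := by
    simp [hf, descPochhammer_eval_neg_one]
  rw [chooseInvSum, sum_congr rfl hterm, ← mul_sum, ZMod.sum_Ico_one_natCast (f.eval ·),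
    FiniteField.sum_eval_eq_zero hdeg, hf0]
  rw [factorial_succ] at hfac ⊢
  push_cast at hfac ⊢
  obtain ⟨hi, hi_fac⟩ := mul_ne_zero_iff.1 hfac
  field_simp
  ring

theorem chooseInvSum_eq_zero {j : ℕ} (h : p ≤ 2 * j) (hj : j < p) : chooseInvSum p j = 0 := by
  refine sum_eq_zero fun k hk => ?_
  rw [(ZMod.natCast_eq_zero_iff _ _).2, zero_mul]
  rcases lt_or_ge k j with hkj | hjk
  · simp [choose_eq_zero_of_lt hkj]
  · rw [add_comm]
    exact dvd_mul_of_dvd_right (hp.out.dvd_choose_add hj (mem_Ico.1 hk).2 (by omega)) _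

end PrimeField

theorem sun_1_6 (p : ℕ) [Fact p.Prime] (hp : Odd p) :
    ∑ k ∈ Finset.Icc 1 (p - 1), (delannoyPoly k (-9) : ZMod p) * (k : ZMod p)⁻¹ =
      -6 * (((2 ^ (p - 1) - 1) / p : ℤ) : ZMod p) := by
  obtain ⟨m, hm⟩ := hp
  have hIcc : Icc 1 (p - 1) = Ico 1 p := by
    ext k
    simp only [mem_Icc, mem_Ico]
    omega
  have hlarge : ∀ j ∈ Ico (m + 1) p, ((-9 : ℤ) : ZMod p) ^ j * chooseInvSum p j = 0 := by
    intro j hj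
    rw [mem_Ico] at hj
    rw [chooseInvSum_eq_zero (by omega) hj.2, mul_zero]
  rw [hIcc, sum_delannoyPoly_mul_inv, ← sum_range_add_sum_Ico _ (by omega : m + 1 ≤ p),
    sum_eq_zero hlarge, add_zero, ← sum_range_nine_pow_mul_inv hm]
  refine sum_congr rfl fun j hj => ?_
  rcases eq_or_ne j 0 with rfl | hj0
  · -- `j = 0`: both sides vanish, the right one because `(0 : ZMod p)⁻¹ = 0`.
    simp [chooseInvSum_zero (p := p) (by omega)]
  · rw [chooseInvSum_of_two_mul_lt hj0 (by rw [mem_range] at hj; omega), ← mul_assoc, ← mul_pow]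
    norm_num
end
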